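/- Eliminating the fourth color turns a 1-dependent 4-coloring into a 3-dependent 3-coloring: identify the colors of Fin 4 with {0,1,2,3} and define φ : (ℤ → Fin 4) → (ℤ → Fin 3) by φ(x)(n) = x(n) if x(n) ∈ {0,1,2}, and φ(x)(n) = the smallest element of {0,1,2} ∖ {x(n−1), x(n+1)} if x(n) = 3. If μ is a probability measure on ℤ → Fin 4 that is stationary, 1-dependent, and a 4-coloring, then the pushforward measure φ_*μ on ℤ → Fin 3 is stationary, 3-dependent, and a 3-coloring. -/

import Mathlib

open MeasureTheory ProbabilityTheory

/-- Configurations: colorings of `ℤ` with `q` colors, with the product σ-algebra. -/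
abbrev Config (q : ℕ) : Type := ℤ → Fin q

/-- The left shift on configurations: `shift x n = x (n + 1)`. -/
def shift {q : ℕ} (x : Config q) : Config q := fun n => x (n + 1)

/-- A measure on configurations is stationary if it is invariant under the shift. -/
def IsShiftStationary {q : ℕ} (μ : Measure (Config q)) : Prop :=
  μ.map shift = μ

/-- A measure on configurations is a (proper) `q`-coloring if almost surely adjacent
coordinates take different values. -/
def IsColoring {q : ℕ} (μ : Measure (Config q)) : Prop :=
  ∀ᵐ x ∂μ, ∀ n : ℤ, x n ≠ x (n + 1)

/-- The σ-algebra on configurations generated by the coordinates in `A ⊆ ℤ`. -/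
def coordSigma (q : ℕ) (A : Set ℤ) : MeasurableSpace (Config q) :=
  ⨆ a ∈ A, MeasurableSpace.comap (fun x : Config q => x a) inferInstance

/-- A measure on configurations is `k`-dependent if the σ-algebras generated by the
coordinates in any two sets `A, B ⊆ ℤ` with `|a - b| > k` for all `a ∈ A`, `b ∈ B`
are independent. -/
def KDependent {q : ℕ} (k : ℕ) (μ : Measure (Config q)) : Prop :=
  ∀ A B : Set ℤ, (∀ a ∈ A, ∀ b ∈ B, (k : ℤ) < |a - b|) →
    Indep (coordSigma q A) (coordSigma q B) μ

/-- Elimination of the fourth color: keep `x n` if it lies in `{0,1,2}`; if `x n = 3`,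
replace it by the smallest element of `{0,1,2}` different from `x (n-1)` and `x (n+1)`
(colors of `Fin 4` and `Fin 3` identified with `{0,1,2,3}` and `{0,1,2}` via their
natural values). -/
def elimFourth (x : Config 4) : Config 3 := fun n =>
  if h : (x n : ℕ) < 3 then ⟨(x n : ℕ), h⟩
  else if (x (n - 1) : ℕ) ≠ 0 ∧ (x (n + 1) : ℕ) ≠ 0 then 0
  else if (x (n - 1) : ℕ) ≠ 1 ∧ (x (n + 1) : ℕ) ≠ 1 then 1
  else 2

/-!
`elimFourth` is a sliding block code of radius 1: the new color at `n` is a function of the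
old colors at `n - 1, n, n + 1`. Hence it commutes with the shift, which preserves
stationarity, and its restriction to a region `A` only sees the 1-neighbourhood of `A`, so
sets at distance `> k + 2` are pulled back to sets at distance `> k`. That adjacent new colors
differ is a finite check on four consecutive old colors.
-/

def intNbhd (r : ℕ) (A : Set ℤ) : Set ℤ := {b | ∃ a ∈ A, |b - a| ≤ r}

lemma mem_intNbhd_of_abs_sub_le {r : ℕ} {A : Set ℤ} {a b : ℤ} (ha : a ∈ A)
    (hb : |b - a| ≤ r) : b ∈ intNbhd r A :=
  ⟨a, ha, hb⟩

lemma lt_abs_sub_of_mem_intNbhd {k r : ℕ} {A B : Set ℤ}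
    (hAB : ∀ a ∈ A, ∀ b ∈ B, ((k + 2 * r : ℕ) : ℤ) < |a - b|) :
    ∀ a ∈ intNbhd r A, ∀ b ∈ intNbhd r B, (k : ℤ) < |a - b| := by
  rintro a' ⟨a, ha, ha'⟩ b' ⟨b, hb, hb'⟩
  have := hAB a ha b hb
  rw [abs_le] at ha' hb'
  rw [lt_abs] at this ⊢
  push_cast at this
  omega

lemma measurable_shift {q : ℕ} : Measurable (shift (q := q)) :=
  measurable_pi_lambda _ fun _ => measurable_pi_apply _

lemma coordSigma_le_pi (q : ℕ) (A : Set ℤ) : coordSigma q A ≤ MeasurableSpace.pi :=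
  iSup₂_le fun a _ => (measurable_pi_apply a).comap_le

lemma measurable_apply_coordSigma {q : ℕ} {A : Set ℤ} {a : ℤ} (ha : a ∈ A) :
    Measurable[coordSigma q A] (fun x : Config q => x a) :=
  measurable_iff_comap_le.2 <| le_iSup₂ (f := fun a (_ : a ∈ A) =>
    MeasurableSpace.comap (fun x : Config q => x a) inferInstance) a ha

lemma measurable_coordSigma_of_forall_apply {α : Type*} {m : MeasurableSpace α} {q : ℕ}
    {A : Set ℤ} {f : α → Config q} (hf : ∀ a ∈ A, Measurable fun y => f y a) :
    Measurable[m, coordSigma q A] f := by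
  rw [measurable_iff_comap_le, coordSigma, MeasurableSpace.comap_iSup]
  refine iSup_le fun a => ?_
  rw [MeasurableSpace.comap_iSup]
  refine iSup_le fun ha => ?_
  rw [MeasurableSpace.comap_comp]
  exact (hf a ha).comap_le

lemma measurableSet_setOf_forall_ne_succ (q : ℕ) :
    MeasurableSet {y : Config q | ∀ n : ℤ, y n ≠ y (n + 1)} := by
  simp only [Set.ofPred_forall]
  exact .iInter fun n =>
    (measurableSet_eq_fun (measurable_pi_apply n) (measurable_pi_apply (n + 1))).compl

lemma ProbabilityTheory.Indep.map {Ω Ω' : Type*} {m₁ m₂ : MeasurableSpace Ω'}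
    {mΩ : MeasurableSpace Ω} {mΩ' : MeasurableSpace Ω'} {μ : Measure Ω} {f : Ω → Ω'}
    (hf : Measurable f) (h₁ : m₁ ≤ mΩ') (h₂ : m₂ ≤ mΩ')
    (h : Indep (m₁.comap f) (m₂.comap f) μ) : Indep m₁ m₂ (μ.map f) := by
  rw [Indep_iff] at h ⊢
  intro s t hs ht
  rw [Measure.map_apply hf ((h₁ s hs).inter (h₂ t ht)), Measure.map_apply hf (h₁ s hs),
    Measure.map_apply hf (h₂ t ht), Set.preimage_inter]
  exact h _ _ ⟨s, hs, rfl⟩ ⟨t, ht, rfl⟩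

section Map

variable {q q' : ℕ} {μ : Measure (Config q)} {f : Config q → Config q'}

lemma IsShiftStationary.map (hf : Measurable f) (hcomm : f ∘ shift = shift ∘ f)
    (hμ : IsShiftStationary μ) : IsShiftStationary (μ.map f) := by
  rw [IsShiftStationary, Measure.map_map measurable_shift hf, ← hcomm,
    ← Measure.map_map hf measurable_shift, hμ]

lemma KDependent.map {k : ℕ} (r : ℕ) (hf : Measurable f)
    (hloc : ∀ A, Measurable[coordSigma q (intNbhd r A), coordSigma q' A] f)
    (hμ : KDependent k μ) : KDependent (k + 2 * r) (μ.map f) := fun A B hAB =>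
  Indep.map hf (coordSigma_le_pi q' A) (coordSigma_le_pi q' B) <|
    indep_of_indep_of_le (hμ _ _ (lt_abs_sub_of_mem_intNbhd hAB))
      (hloc A).comap_le (hloc B).comap_le

lemma IsColoring.map (hf : Measurable f)
    (hproper : ∀ x : Config q, (∀ n, x n ≠ x (n + 1)) → ∀ n, f x n ≠ f x (n + 1))
    (hμ : IsColoring μ) : IsColoring (μ.map f) :=
  (ae_map_iff hf.aemeasurable (measurableSet_setOf_forall_ne_succ q')).2 <|
    hμ.mono hproper

end Map

def elimRule (p c s : Fin 4) : Fin 3 :=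
  if h : (c : ℕ) < 3 then ⟨(c : ℕ), h⟩
  else if (p : ℕ) ≠ 0 ∧ (s : ℕ) ≠ 0 then 0
  else if (p : ℕ) ≠ 1 ∧ (s : ℕ) ≠ 1 then 1
  else 2

lemma elimFourth_apply (x : Config 4) (n : ℤ) :
    elimFourth x n = elimRule (x (n - 1)) (x n) (x (n + 1)) := rfl

lemma elimRule_ne_elimRule :
    ∀ a b c d : Fin 4, a ≠ b → b ≠ c → c ≠ d → elimRule a b c ≠ elimRule b c d := by
  decide

lemma elimFourth_comp_shift : elimFourth ∘ shift = shift ∘ elimFourth := by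
  funext x n
  simp only [Function.comp_apply, elimFourth_apply, shift, sub_add_cancel,
    add_sub_cancel_right]

lemma measurable_elimFourth_apply_coordSigma {S : Set ℤ} {n : ℤ} (h₁ : n - 1 ∈ S)
    (h₂ : n ∈ S) (h₃ : n + 1 ∈ S) : Measurable[coordSigma 4 S] fun x => elimFourth x n :=
  (Measurable.of_discrete (f := fun p : Fin 4 × Fin 4 × Fin 4 => elimRule p.1 p.2.1 p.2.2)).comp
    ((measurable_apply_coordSigma h₁).prodMk
      ((measurable_apply_coordSigma h₂).prodMk (measurable_apply_coordSigma h₃)))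

lemma measurable_elimFourth_coordSigma (A : Set ℤ) :
    Measurable[coordSigma 4 (intNbhd 1 A), coordSigma 3 A] elimFourth :=
  measurable_coordSigma_of_forall_apply fun a ha =>
    measurable_elimFourth_apply_coordSigma (mem_intNbhd_of_abs_sub_le ha (by simp))
      (mem_intNbhd_of_abs_sub_le ha (by simp)) (mem_intNbhd_of_abs_sub_le ha (by simp))

lemma measurable_elimFourth : Measurable elimFourth :=
  measurable_pi_lambda _ fun _ =>
    (measurable_elimFourth_apply_coordSigma (S := Set.univ) trivial trivial trivial).mono
      (coordSigma_le_pi 4 Set.univ) le_rfl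

lemma elimFourth_proper {x : Config 4} (hx : ∀ n, x n ≠ x (n + 1)) (n : ℤ) :
    elimFourth x n ≠ elimFourth x (n + 1) := by
  rw [elimFourth_apply, elimFourth_apply, add_sub_cancel_right]
  exact elimRule_ne_elimRule _ _ _ _ (by simpa using hx (n - 1)) (hx n) (hx (n + 1))

theorem elimFourth_three_dependent_three_coloring_general (μ : Measure (Config 4))
    (hstat : IsShiftStationary μ)
    (hdep : KDependent 1 μ) (hcol : IsColoring μ) :
    IsShiftStationary (μ.map elimFourth) ∧ KDependent 3 (μ.map elimFourth) ∧
      IsColoring (μ.map elimFourth) :=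
  ⟨hstat.map measurable_elimFourth elimFourth_comp_shift,
    hdep.map 1 measurable_elimFourth measurable_elimFourth_coordSigma,
    hcol.map measurable_elimFourth fun _ => elimFourth_proper⟩

/-- Eliminating the fourth color turns a stationary 1-dependent 4-coloring into a
stationary 3-dependent 3-coloring. -/
theorem elimFourth_three_dependent_three_coloring (μ : Measure (Config 4))
    (hprob : IsProbabilityMeasure μ) (hstat : IsShiftStationary μ)
    (hdep : KDependent 1 μ) (hcol : IsColoring μ) :
    IsShiftStationary (μ.map elimFourth) ∧ KDependent 3 (μ.map elimFourth) ∧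
      IsColoring (μ.map elimFourth) :=
  elimFourth_three_dependent_three_coloring_general μ hstat hdep hcol
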